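/- arXiv:2003.03965 — 5 statements merged into one kernel-verified Lean document; each statement's English description precedes it below -/
import Mathlib

section
/- Let f be a monic polynomial of degree m over ℂ with distinct roots α_1,...,α_m, A its companion matrix, M = Σ_{n=0}^{m-1} x_n A^n with x_i ∈ ℂ, and γ_j = Σ_{i=0}^{m-1} x_i α_j^i. Suppose for a fixed k we have |γ_k| > |γ_j| for all j ≠ k and γ_k ≠ 0. Then for any indices i,j,p,q with V^{-1}_{p,k} V_{k,q} ≠ 0, the ratio (M^n)_{i,j} / (M^n)_{p,q} converges as n → ∞ to (V^{-1}_{i,k} V_{k,j}) / (V^{-1}_{p,k} V_{k,q}). -/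
/-!
The Vandermonde matrix `V` of the roots diagonalises the companion matrix: `V * A = diag α * V`,
because `α_k ^ m` is the combination of lower powers prescribed by the last column of `A`. Hence
`V * M = diag γ * V` and `(M ^ n) i j = ∑ t, V⁻¹ i t * V t j * γ t ^ n`. After dividing numerator
and denominator by `γ k ^ n`, every term with `t ≠ k` tends to zero since `|γ t / γ k| < 1`.
-/

open Matrix BigOperators Filter Topology

theorem Matrix.vandermonde_mul_companion_eq_diagonal_mul {R : Type*} [CommRing R] {m : ℕ}
    {u α : Fin m → R} (hroot : ∀ k, α k ^ m = ∑ s : Fin m, u s.rev * α k ^ (s : ℕ))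
    {A : Matrix (Fin m) (Fin m) R}
    (hA : ∀ i j : Fin m, A i j =
      if (j : ℕ) = m - 1 then u i.rev else if (i : ℕ) = (j : ℕ) + 1 then 1 else 0) :
    vandermonde α * A = diagonal α * vandermonde α := by
  ext r c
  rw [diagonal_mul, mul_apply]
  simp only [vandermonde_apply, hA]
  by_cases hc : (c : ℕ) = m - 1
  · simp only [hc, if_true, mul_comm (α r ^ _), ← hroot]
    rw [← pow_succ', Nat.sub_add_cancel (by omega)]
  · have hlt : (c : ℕ) + 1 < m := by omega
    have hsingle : ∀ s : Fin m, ((s : ℕ) = c + 1) ↔ s = ⟨c + 1, hlt⟩ := fun s => by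
      simp [Fin.ext_iff]
    simp only [hc, if_false, hsingle, mul_ite, mul_one, mul_zero, Finset.sum_ite_eq',
      Finset.mem_univ, if_true, pow_succ']

theorem Matrix.mul_sum_smul_pow_eq_diagonal_mul {R n : Type*} [CommRing R] [Fintype n]
    [DecidableEq n] {N : ℕ} {V A : Matrix n n R} {d : n → R} (h : V * A = diagonal d * V)
    (x : Fin N → R) :
    V * ∑ s, x s • A ^ (s : ℕ) = diagonal (fun t => ∑ s, x s * d t ^ (s : ℕ)) * V := by
  have hpow : ∀ e : ℕ, V * A ^ e = diagonal d ^ e * V := fun e => (SemiconjBy.pow_right h e).eq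
  simp only [Matrix.mul_sum, mul_smul_comm, hpow, diagonal_pow, ← smul_mul_assoc, ← Finset.sum_mul]
  congr 1
  ext a b
  by_cases hab : a = b <;> simp [hab, Matrix.sum_apply]

theorem Matrix.pow_apply_eq_sum_of_mul_eq_diagonal_mul {R n : Type*} [CommRing R] [Fintype n]
    [DecidableEq n] {V M : Matrix n n R} {γ : n → R} (hV : IsUnit V.det)
    (h : V * M = diagonal γ * V) (e : ℕ) (a b : n) :
    (M ^ e) a b = ∑ t, V⁻¹ a t * V t b * γ t ^ e := by
  have : M ^ e = V⁻¹ * diagonal γ ^ e * V := by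
    rw [Matrix.mul_assoc, ← (SemiconjBy.pow_right h e).eq, ← Matrix.mul_assoc,
      nonsing_inv_mul _ hV, Matrix.one_mul]
  rw [this, diagonal_pow, mul_apply]
  exact Finset.sum_congr rfl fun t _ => by rw [mul_diagonal, Pi.pow_apply]; ring

theorem tendsto_sum_mul_pow_div_pow_of_norm_lt {ι 𝕜 : Type*} [Fintype ι] [NormedField 𝕜]
    (c γ : ι → 𝕜) {k : ι} (hγk : γ k ≠ 0) (hdom : ∀ j, j ≠ k → ‖γ j‖ < ‖γ k‖) :
    Tendsto (fun n : ℕ => (∑ t, c t * γ t ^ n) / γ k ^ n) atTop (𝓝 (c k)) := by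
  classical
  have hterm : ∀ t, Tendsto (fun n : ℕ => c t * (γ t / γ k) ^ n) atTop
      (𝓝 (if t = k then c k else 0)) := by
    intro t
    split_ifs with ht
    · subst ht
      simp [div_self hγk]
    · have hlt : ‖γ t / γ k‖ < 1 := by
        rw [norm_div, div_lt_one (norm_pos_iff.2 hγk)]
        exact hdom t ht
      simpa using (tendsto_pow_atTop_nhds_zero_of_norm_lt_one hlt).const_mul (c t)
  have := tendsto_finsetSum Finset.univ fun t _ => hterm t
  rw [Finset.sum_ite_eq' Finset.univ k, if_pos (Finset.mem_univ k)] at this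
  refine this.congr fun n => ?_
  rw [Finset.sum_div]
  exact Finset.sum_congr rfl fun t _ => by rw [div_pow, mul_div_assoc]

theorem tendsto_sum_mul_pow_div_sum_mul_pow_of_norm_lt {ι 𝕜 : Type*} [Fintype ι]
    [NormedField 𝕜] (c d γ : ι → 𝕜) {k : ι} (hγk : γ k ≠ 0)
    (hdom : ∀ j, j ≠ k → ‖γ j‖ < ‖γ k‖) (hd : d k ≠ 0) :
    Tendsto (fun n : ℕ => (∑ t, c t * γ t ^ n) / ∑ t, d t * γ t ^ n) atTop
      (𝓝 (c k / d k)) :=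
  ((tendsto_sum_mul_pow_div_pow_of_norm_lt c γ hγk hdom).div
    (tendsto_sum_mul_pow_div_pow_of_norm_lt d γ hγk hdom) hd).congr fun n =>
      div_div_div_cancel_right₀ (pow_ne_zero n hγk) _ _

theorem regular_rep_ratio_tendsto_general (m : ℕ)
    (u : Fin m → ℂ) (α : Fin m → ℂ) (hdist : Function.Injective α)
    (hroot : ∀ k : Fin m, α k ^ m = ∑ s : Fin m, u s.rev * α k ^ (s : ℕ))
    (A : Matrix (Fin m) (Fin m) ℂ)
    (hA : ∀ i j : Fin m, A i j =
      if (j : ℕ) = m - 1 then u i.rev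
      else if (i : ℕ) = (j : ℕ) + 1 then 1 else 0)
    (x : Fin m → ℂ) (M : Matrix (Fin m) (Fin m) ℂ)
    (hM : M = ∑ n : Fin m, x n • A ^ (n : ℕ))
    (γ : Fin m → ℂ) (hγ : ∀ k, γ k = ∑ s : Fin m, x s * α k ^ (s : ℕ))
    (k : Fin m) (hγk : γ k ≠ 0)
    (hdom : ∀ j : Fin m, j ≠ k → ‖γ j‖ < ‖γ k‖)
    (i j p q : Fin m)
    (hden : (Matrix.vandermonde α)⁻¹ p k * Matrix.vandermonde α k q ≠ 0) :
    Tendsto (fun n : ℕ => (M ^ n) i j / (M ^ n) p q) atTop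
      (nhds ((Matrix.vandermonde α)⁻¹ i k * Matrix.vandermonde α k j /
        ((Matrix.vandermonde α)⁻¹ p k * Matrix.vandermonde α k q))) := by
  have hV : IsUnit (vandermonde α).det :=
    isUnit_iff_ne_zero.2 (det_vandermonde_ne_zero_iff.2 hdist)
  have hVM : vandermonde α * M = diagonal γ * vandermonde α := by
    rw [hM, mul_sum_smul_pow_eq_diagonal_mul
      (vandermonde_mul_companion_eq_diagonal_mul hroot hA), ← funext hγ]
  simp only [pow_apply_eq_sum_of_mul_eq_diagonal_mul hV hVM]
  exact tendsto_sum_mul_pow_div_sum_mul_pow_of_norm_lt _ _ γ hγk hdom hden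

/-- Convergence of ratios of entries of powers of the regular representation matrix,
under the dominance condition `|γₖ| > |γⱼ|` for `j ≠ k`. -/
theorem regular_rep_ratio_tendsto (m : ℕ) (hm : 1 ≤ m)
    (u : Fin m → ℂ) (α : Fin m → ℂ) (hdist : Function.Injective α)
    (hroot : ∀ k : Fin m, α k ^ m = ∑ s : Fin m, u s.rev * α k ^ (s : ℕ))
    (A : Matrix (Fin m) (Fin m) ℂ)
    (hA : ∀ i j : Fin m, A i j =
      if (j : ℕ) = m - 1 then u i.rev
      else if (i : ℕ) = (j : ℕ) + 1 then 1 else 0)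
    (x : Fin m → ℂ) (M : Matrix (Fin m) (Fin m) ℂ)
    (hM : M = ∑ n : Fin m, x n • A ^ (n : ℕ))
    (γ : Fin m → ℂ) (hγ : ∀ k, γ k = ∑ s : Fin m, x s * α k ^ (s : ℕ))
    (k : Fin m) (hγk : γ k ≠ 0)
    (hdom : ∀ j : Fin m, j ≠ k → ‖γ j‖ < ‖γ k‖)
    (i j p q : Fin m)
    (hden : (Matrix.vandermonde α)⁻¹ p k * Matrix.vandermonde α k q ≠ 0) :
    Tendsto (fun n : ℕ => (M ^ n) i j / (M ^ n) p q) atTop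
      (nhds ((Matrix.vandermonde α)⁻¹ i k * Matrix.vandermonde α k j /
        ((Matrix.vandermonde α)⁻¹ p k * Matrix.vandermonde α k q))) :=
  regular_rep_ratio_tendsto_general m u α hdist hroot A hA x M hM γ hγ k hγk hdom i j p q hden
end

section
/- Under the dominance condition |γ_k| > |γ_j| for all j ≠ k, writing A_s = V^{-1}_{i,k_s} V_{k_s,j} and B_s = V^{-1}_{p,k_s} V_{k_s,q} (with the notation of the limit theorem), if B_k ≠ 0 then there exists a constant C such that |(M^n)_{i,j}/(M^n)_{p,q} - A_k/B_k| ≤ C · (max_{j≠k} |γ_j|/|γ_k|)^n for all sufficiently large n. -/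
/-!
The Vandermonde matrix `V` of the roots conjugates the companion matrix to `diagonal α`, hence `M`
to `diagonal γ`, so `(Mⁿ)ᵢⱼ = ∑ₗ V⁻¹ᵢₗ Vₗⱼ γₗⁿ`. After dividing by `γₖⁿ`, numerator and
denominator of the ratio are their dominant coefficients up to `O(rⁿ)`, and since the
denominator tends to `B_k ≠ 0`, the ratio is `A_k / B_k` up to `O(rⁿ)` as well.
-/
open Matrix BigOperators Filter
open Asymptotics Topology

theorem SemiconjBy.finset_sum_right {ι R : Type*} [NonUnitalNonAssocSemiring R] {a : R}
    {s : Finset ι} {x y : ι → R} (h : ∀ i ∈ s, SemiconjBy a (x i) (y i)) :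
    SemiconjBy a (∑ i ∈ s, x i) (∑ i ∈ s, y i) := by
  simp only [SemiconjBy, Finset.mul_sum, Finset.sum_mul]
  exact Finset.sum_congr rfl h

namespace Matrix

variable {R : Type*} {m : ℕ}

/-- The companion matrix of `X ^ m - ∑ s, u s.rev * X ^ s`. -/
def companion [Zero R] [One R] (u : Fin m → R) : Matrix (Fin m) (Fin m) R :=
  of fun i j => if (j : ℕ) = m - 1 then u i.rev else if (i : ℕ) = j + 1 then 1 else 0

theorem vandermonde_mul_companion [CommRing R] {α u : Fin m → R}
    (hroot : ∀ l, α l ^ m = ∑ s : Fin m, u s.rev * α l ^ (s : ℕ)) :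
    vandermonde α * companion u = diagonal α * vandermonde α := by
  ext l j
  rw [mul_apply, diagonal_mul, vandermonde_apply, ← pow_succ']
  simp only [vandermonde_apply, companion, of_apply]
  by_cases hj : (j : ℕ) = m - 1
  · simp only [hj, if_true, mul_comm (α l ^ _)]
    rw [← hroot, Nat.sub_add_cancel (Fin.pos j)]
  · have hlt : (j : ℕ) + 1 < m := by omega
    rw [Finset.sum_eq_single ⟨j + 1, hlt⟩]
    · simp [hj]
    · intro s _ hs
      simp [hj, Fin.ext_iff.not.1 hs]
    · simp

theorem sum_smul_diagonal_pow {ι n R : Type*} [Fintype n] [DecidableEq n] [CommSemiring R]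
    (s : Finset ι) (x : ι → R) (e : ι → ℕ) (α : n → R) :
    ∑ i ∈ s, x i • diagonal α ^ e i = diagonal fun l => ∑ i ∈ s, x i * α l ^ e i := by
  ext a b
  by_cases hab : a = b <;> simp [diagonal_pow, sum_apply, hab]

theorem pow_apply_of_semiconjBy_diagonal {n R : Type*} [Fintype n] [DecidableEq n]
    [CommRing R] {V M : Matrix n n R} {γ : n → R} (h : SemiconjBy V M (diagonal γ))
    (hV : IsUnit V.det) (k : ℕ) (a b : n) :
    (M ^ k) a b = ∑ l, V⁻¹ a l * V l b * γ l ^ k := by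
  have hdiag : M ^ k = V⁻¹ * (diagonal γ ^ k * V) := by
    rw [← (h.pow_right k).eq, ← Matrix.mul_assoc, nonsing_inv_mul _ hV, Matrix.one_mul]
  rw [hdiag, diagonal_pow, mul_apply]
  refine Finset.sum_congr rfl fun l _ => ?_
  rw [diagonal_mul, Pi.pow_apply]
  ring

end Matrix

theorem isBigO_sum_mul_pow_sub {ι 𝕜 : Type*} [Fintype ι] [NormedField 𝕜] (c z : ι → 𝕜)
    {k : ι} {r : ℝ} (hzk : z k = 1) (hz : ∀ l ≠ k, ‖z l‖ ≤ r) :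
    (fun n : ℕ => ∑ l, c l * z l ^ n - c k) =O[atTop] fun n => r ^ n := by
  classical
  refine IsBigO.of_bound (∑ l ∈ Finset.univ.erase k, ‖c l‖) (Eventually.of_forall fun n => ?_)
  rw [← Finset.add_sum_erase _ _ (Finset.mem_univ k), hzk, one_pow, mul_one, add_sub_cancel_left,
    Finset.sum_mul, norm_pow, Real.norm_eq_abs]
  refine (norm_sum_le _ _).trans (Finset.sum_le_sum fun l hl => ?_)
  rw [norm_mul, norm_pow]
  gcongr
  exact (hz l (Finset.ne_of_mem_erase hl)).trans (le_abs_self r)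

theorem isBigO_div_sub_div {α 𝕜 : Type*} [NormedField 𝕜] {l : Filter α} {f g : α → 𝕜}
    {a b : 𝕜} {u : α → ℝ} (hb : b ≠ 0) (hf : (fun x => f x - a) =O[l] u)
    (hg : (fun x => g x - b) =O[l] u) (hu : Tendsto u l (𝓝 0)) :
    (fun x => f x / g x - a / b) =O[l] u := by
  have hgb : Tendsto g l (𝓝 b) := tendsto_sub_nhds_zero_iff.1 (hg.trans_tendsto hu)
  have hinv : (fun x => (g x * b)⁻¹) =O[l] fun _ => (1 : ℝ) :=
    ((hgb.mul_const b).inv₀ (mul_ne_zero hb hb)).isBigO_one ℝ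
  have hnum : (fun x => b * (f x - a) - a * (g x - b)) =O[l] u :=
    (hf.const_mul_left b).sub (hg.const_mul_left a)
  -- `f / g - a / b = (b (f - a) - a (g - b)) / (g b)` wherever `g ≠ 0`
  refine (hnum.mul hinv).congr' ?_ (by simp)
  filter_upwards [hgb.eventually_ne hb] with x hx
  field_simp
  ring

theorem isBigO_sum_mul_pow_div_sum_mul_pow_sub {ι 𝕜 : Type*} [Fintype ι] [NormedField 𝕜]
    (c d γ : ι → 𝕜) {k : ι} {r : ℝ} (hγk : γ k ≠ 0) (hd : d k ≠ 0)
    (hr : ∀ l ≠ k, ‖γ l / γ k‖ ≤ r) (hr0 : 0 ≤ r) (hr1 : r < 1) :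
    (fun n : ℕ => (∑ l, c l * γ l ^ n) / (∑ l, d l * γ l ^ n) - c k / d k) =O[atTop]
      fun n => r ^ n := by
  have hscale : ∀ (e : ι → 𝕜) (n : ℕ),
      ∑ l, e l * γ l ^ n = γ k ^ n * ∑ l, e l * (γ l / γ k) ^ n := by
    intro e n
    rw [Finset.mul_sum]
    refine Finset.sum_congr rfl fun l _ => ?_
    rw [div_pow, mul_left_comm, mul_div_cancel₀ _ (pow_ne_zero n hγk)]
  have hzk : γ k / γ k = 1 := div_self hγk
  refine (isBigO_div_sub_div hd (isBigO_sum_mul_pow_sub c _ hzk hr)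
    (isBigO_sum_mul_pow_sub d _ hzk hr) (tendsto_pow_atTop_nhds_zero_of_lt_one hr0 hr1)).congr'
    (Eventually.of_forall fun n => ?_) EventuallyEq.rfl
  simp only [hscale _ n, mul_div_mul_left _ _ (pow_ne_zero n hγk)]

theorem regular_rep_ratio_rate_general (m : ℕ)
    (u : Fin m → ℂ) (α : Fin m → ℂ) (hdist : Function.Injective α)
    (hroot : ∀ k : Fin m, α k ^ m = ∑ s : Fin m, u s.rev * α k ^ (s : ℕ))
    (A : Matrix (Fin m) (Fin m) ℂ)
    (hA : ∀ i j : Fin m, A i j =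
      if (j : ℕ) = m - 1 then u i.rev
      else if (i : ℕ) = (j : ℕ) + 1 then 1 else 0)
    (x : Fin m → ℂ) (M : Matrix (Fin m) (Fin m) ℂ)
    (hM : M = ∑ n : Fin m, x n • A ^ (n : ℕ))
    (γ : Fin m → ℂ) (hγ : ∀ k, γ k = ∑ s : Fin m, x s * α k ^ (s : ℕ))
    (k : Fin m)
    (hdom : ∀ j : Fin m, j ≠ k → ‖γ j‖ < ‖γ k‖)
    (hne : (Finset.univ.erase k).Nonempty)
    (i j p q : Fin m)
    (hden : (Matrix.vandermonde α)⁻¹ p k * Matrix.vandermonde α k q ≠ 0) :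
    ∃ C : ℝ, ∀ᶠ n : ℕ in atTop,
      ‖(M ^ n) i j / (M ^ n) p q -
          (Matrix.vandermonde α)⁻¹ i k * Matrix.vandermonde α k j /
            ((Matrix.vandermonde α)⁻¹ p k * Matrix.vandermonde α k q)‖ ≤
        C * ((Finset.univ.erase k).sup' hne
          (fun l => ‖γ l‖ / ‖γ k‖)) ^ n := by
  have hV : IsUnit (vandermonde α).det :=
    isUnit_iff_ne_zero.2 (det_vandermonde_ne_zero_iff.2 hdist)
  have hVA : SemiconjBy (vandermonde α) A (diagonal α) := by
    rw [show A = companion u from Matrix.ext hA]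
    exact vandermonde_mul_companion hroot
  have hVM : SemiconjBy (vandermonde α) M (diagonal γ) := by
    rw [hM, funext hγ, ← sum_smul_diagonal_pow]
    exact SemiconjBy.finset_sum_right fun s _ => (hVA.pow_right s).smul_right (x s)
  set r := (Finset.univ.erase k).sup' hne fun l => ‖γ l‖ / ‖γ k‖
  have ⟨l₀, hl₀⟩ := hne
  have hγk : γ k ≠ 0 :=
    norm_pos_iff.1 ((norm_nonneg _).trans_lt (hdom l₀ (Finset.ne_of_mem_erase hl₀)))
  have hr : ∀ l ≠ k, ‖γ l / γ k‖ ≤ r := fun l hl =>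
    (norm_div (γ l) (γ k)).trans_le
      (Finset.le_sup' (fun l => ‖γ l‖ / ‖γ k‖) (Finset.mem_erase.2 ⟨hl, Finset.mem_univ l⟩))
  have hr0 : 0 ≤ r := (norm_nonneg _).trans (hr l₀ (Finset.ne_of_mem_erase hl₀))
  have hr1 : r < 1 := (Finset.sup'_lt_iff hne).2 fun l hl =>
    (div_lt_one (norm_pos_iff.2 hγk)).2 (hdom l (Finset.ne_of_mem_erase hl))
  obtain ⟨C, hC⟩ := isBigO_iff.1 (isBigO_sum_mul_pow_div_sum_mul_pow_sub
    (fun l => (vandermonde α)⁻¹ i l * vandermonde α l j)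
    (fun l => (vandermonde α)⁻¹ p l * vandermonde α l q) γ hγk hden hr hr0 hr1)
  refine ⟨C, hC.mono fun n hn => ?_⟩
  simpa only [pow_apply_of_semiconjBy_diagonal hVM hV, norm_pow, Real.norm_of_nonneg hr0] using hn

/-- Rate of convergence: under the dominance condition, the error of the ratio of
entries of `Mⁿ` is `O((max_{j≠k} |γⱼ|/|γₖ|)ⁿ)`. -/
theorem regular_rep_ratio_rate (m : ℕ) (hm : 1 ≤ m)
    (u : Fin m → ℂ) (α : Fin m → ℂ) (hdist : Function.Injective α)
    (hroot : ∀ k : Fin m, α k ^ m = ∑ s : Fin m, u s.rev * α k ^ (s : ℕ))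
    (A : Matrix (Fin m) (Fin m) ℂ)
    (hA : ∀ i j : Fin m, A i j =
      if (j : ℕ) = m - 1 then u i.rev
      else if (i : ℕ) = (j : ℕ) + 1 then 1 else 0)
    (x : Fin m → ℂ) (M : Matrix (Fin m) (Fin m) ℂ)
    (hM : M = ∑ n : Fin m, x n • A ^ (n : ℕ))
    (γ : Fin m → ℂ) (hγ : ∀ k, γ k = ∑ s : Fin m, x s * α k ^ (s : ℕ))
    (k : Fin m) (hγk : γ k ≠ 0)
    (hdom : ∀ j : Fin m, j ≠ k → ‖γ j‖ < ‖γ k‖)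
    (hne : (Finset.univ.erase k).Nonempty)
    (i j p q : Fin m)
    (hden : (Matrix.vandermonde α)⁻¹ p k * Matrix.vandermonde α k q ≠ 0) :
    ∃ C : ℝ, ∀ᶠ n : ℕ in atTop,
      ‖(M ^ n) i j / (M ^ n) p q -
          (Matrix.vandermonde α)⁻¹ i k * Matrix.vandermonde α k j /
            ((Matrix.vandermonde α)⁻¹ p k * Matrix.vandermonde α k q)‖ ≤
        C * ((Finset.univ.erase k).sup' hne
          (fun l => ‖γ l‖ / ‖γ k‖)) ^ n :=
  regular_rep_ratio_rate_general m u α hdist hroot A hA x M hM γ hγ k hdom hne i j p q hden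
end

section
/- For the Vandermonde matrix V of distinct nonzero α_1,...,α_m, for every index t one has V^{-1}_{m,t} = 1 / ∏_{h ≠ t} (α_t - α_h). -/
open Polynomial

/-
The inverse of a Vandermonde matrix has as its columns the coefficient vectors of the Lagrange
basis polynomials `Lₜ = ∏_{h ≠ t} (X - αₕ) / (αₜ - αₕ)`: row `s` of `V` applied to the
coefficients of `Lₜ` is `Lₜ(αₛ) = δₛₜ`. Since `Lₜ` has degree `m - 1`, the last row of `V⁻¹`
consists of the leading coefficients `∏_{h ≠ t} (αₜ - αₕ)⁻¹`.
-/

namespace Matrix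

theorem vandermonde_mul_of_coeff {R : Type*} [CommRing R] {n : ℕ} (v : Fin n → R)
    (p : Fin n → R[X]) (h_deg : ∀ j, (p j).natDegree < n) :
    vandermonde v * of (fun (i j : Fin n) => (p j).coeff i) = of fun i j => (p j).eval (v i) := by
  ext i j
  rw [mul_apply, of_apply, eval_eq_sum_range' (h_deg j), ← Fin.sum_univ_eq_sum_range]
  simp only [vandermonde_apply, of_apply, mul_comm]

theorem vandermonde_mul_of_coeff_lagrangeBasis {K : Type*} [Field K] {n : ℕ} {v : Fin n → K}
    (hv : Function.Injective v) :
    vandermonde v * of (fun (i j : Fin n) => (Lagrange.basis Finset.univ v j).coeff i) = 1 := by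
  rw [vandermonde_mul_of_coeff]
  · ext i j
    rw [of_apply]
    by_cases hij : i = j
    · rw [hij, Lagrange.eval_basis_self hv.injOn (Finset.mem_univ j), one_apply_eq]
    · rw [Lagrange.eval_basis_of_ne (Ne.symm hij) (Finset.mem_univ i), one_apply_ne hij]
  · intro j
    rw [Lagrange.natDegree_basis hv.injOn (Finset.mem_univ j), Finset.card_fin]
    exact Nat.sub_lt (Fin.pos j) one_pos

theorem inv_vandermonde_apply {K : Type*} [Field K] {n : ℕ} {v : Fin n → K}
    (hv : Function.Injective v) (i j : Fin n) :
    (vandermonde v)⁻¹ i j = (Lagrange.basis Finset.univ v j).coeff i := by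
  rw [inv_eq_right_inv (vandermonde_mul_of_coeff_lagrangeBasis hv), of_apply]

end Matrix

/-- Last row of the inverse Vandermonde matrix: `V⁻¹_{m,t} = 1 / ∏_{h ≠ t} (αₜ - αₕ)`. -/
theorem vandermonde_inv_last_row {K : Type*} [Field K] (m : ℕ) (hm : 1 ≤ m)
    (α : Fin m → K) (hdist : Function.Injective α) (t : Fin m) :
    (Matrix.vandermonde α)⁻¹ ⟨m - 1, by omega⟩ t =
      (∏ h ∈ Finset.univ.erase t, (α t - α h))⁻¹ := by
  have hdeg : (Lagrange.basis Finset.univ α t).natDegree = m - 1 := by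
    rw [Lagrange.natDegree_basis hdist.injOn (Finset.mem_univ t), Finset.card_fin]
  rw [Matrix.inv_vandermonde_apply hdist, Fin.val_mk, ← hdeg, ← leadingCoeff,
    Lagrange.leadingCoeff_basis hdist.injOn (Finset.mem_univ t)]
end

section
/- With the setting of the regular representation matrix M and distinct nonzero roots α_1,...,α_m, the ratio (V^{-1}_{m,t} V_{t,m-1}) / (V^{-1}_{1,t} V_{t,m}) equals 1/((-1)^{m-1} ∏_{h=1}^m α_h) for every index t; in particular it is independent of t. -/
/-!
Column `t` of `V⁻¹` is the coefficient vector of the Lagrange basis polynomial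
`Lₜ = ∏_{j ≠ t} (X - αⱼ) / (αₜ - αⱼ)`, because `V` evaluates polynomials of degree `< m` at the
nodes. The leading coefficient of `Lₜ` is `w = ∏_{j ≠ t} (αₜ - αⱼ)⁻¹` and its constant coefficient
is `w ∏_{j ≠ t} (-αⱼ)`; the factor `w` cancels in the ratio, leaving
`αₜ^{m-2} / (αₜ^{m-1} ∏_{j ≠ t} (-αⱼ)) = 1 / ((-1)^{m-1} ∏ αₕ)`.
-/

open Matrix Polynomial Finset

lemma pow_div_pow_succ {G₀ : Type*} [CommGroupWithZero G₀] (a : G₀) (n : ℕ) :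
    a ^ n / a ^ (n + 1) = a⁻¹ := by
  rcases eq_or_ne a 0 with rfl | ha
  · simp
  · rw [pow_succ, div_mul_cancel_left₀ (pow_ne_zero n ha)]

namespace Lagrange

variable {F ι : Type*} [Field F] [DecidableEq ι] {s : Finset ι} {v : ι → F} {i : ι}

theorem coeff_basis_card_sub_one (hvs : Set.InjOn v s) (hi : i ∈ s) :
    (Lagrange.basis s v i).coeff (#s - 1) = nodalWeight s v i := by
  rw [← natDegree_basis hvs hi, coeff_natDegree, leadingCoeff_basis hvs hi, nodalWeight,
    prod_inv_distrib]

theorem coeff_basis_zero :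
    (Lagrange.basis s v i).coeff 0 = nodalWeight s v i * ∏ j ∈ s.erase i, -v j := by
  simp [coeff_zero_eq_eval_zero, Lagrange.basis, basisDivisor, eval_prod, nodalWeight,
    prod_mul_distrib]

end Lagrange

theorem Matrix.vandermonde_inv_apply {K : Type*} [Field K] {n : ℕ} {v : Fin n → K}
    (hv : Function.Injective v) (i j : Fin n) :
    (vandermonde v)⁻¹ i j = (Lagrange.basis univ v j).coeff i := by
  suffices vandermonde v * of (fun i j : Fin n => (Lagrange.basis univ v j).coeff i) = 1 by
    rw [inv_eq_right_inv this, of_apply]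
  ext s t
  have hdeg : (Lagrange.basis univ v t).natDegree < n := by
    rw [Lagrange.natDegree_basis hv.injOn (mem_univ t), card_fin]
    exact Nat.sub_lt t.pos one_pos
  calc (vandermonde v * of fun i j : Fin n => (Lagrange.basis univ v j).coeff i) s t
      = (Lagrange.basis univ v t).eval (v s) := by
        simp only [mul_apply, vandermonde_apply, of_apply, eval_eq_sum_range' hdeg,
          ← Fin.sum_univ_eq_sum_range, mul_comm]
    _ = (1 : Matrix (Fin n) (Fin n) K) s t := by
        rcases eq_or_ne s t with rfl | hst
        · simp [Lagrange.eval_basis_self hv.injOn]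
        · simp [Lagrange.eval_basis_of_ne hst.symm, hst]

/-- The ratio `(V⁻¹_{m,t} V_{t,m-1}) / (V⁻¹_{1,t} V_{t,m})` equals
`1/((-1)^{m-1} ∏ αₕ)`, independently of `t`. -/
theorem vandermonde_ratio_const {K : Type*} [Field K] (m : ℕ) (hm : 2 ≤ m)
    (α : Fin m → K) (hdist : Function.Injective α) (t : Fin m) :
    (Matrix.vandermonde α)⁻¹ ⟨m - 1, by omega⟩ t * Matrix.vandermonde α t ⟨m - 2, by omega⟩ /
      ((Matrix.vandermonde α)⁻¹ ⟨0, by omega⟩ t * Matrix.vandermonde α t ⟨m - 1, by omega⟩) =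
      1 / ((-1) ^ (m - 1) * ∏ h : Fin m, α h) := by
  have htop := Lagrange.coeff_basis_card_sub_one hdist.injOn (mem_univ t)
  have hw := Lagrange.nodalWeight_ne_zero hdist.injOn (mem_univ t)
  have hprod : (-1) ^ (m - 1) * ∏ h, α h = (∏ j ∈ univ.erase t, -α j) * α t := by
    rw [prod_neg, card_erase_of_mem (mem_univ t), card_fin, mul_assoc,
      prod_erase_mul _ _ (mem_univ t)]
  rw [card_fin] at htop
  simp only [vandermonde_inv_apply hdist, vandermonde_apply, htop, Lagrange.coeff_basis_zero,
    hprod]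
  rw [show m - 1 = m - 2 + 1 by omega, mul_assoc, mul_div_mul_left _ _ hw,
    div_mul_eq_div_div_swap, pow_div_pow_succ]
  ring
end

section
/- Let r > 1 be a real number that is not a perfect cube of a rational, let A be the Khovanskii matrix with rows (x, r, r), (1, x, r), (1, 1, x) for a rational x ≥ 0. If |x + r^{1/3} + r^{2/3}| > |x + ω r^{1/3} + ω² r^{2/3}| for both primitive cube roots of unity ω (which holds e.g. for x ≥ 0, r > 1), then lim_{n→∞} (A^n)_{2,1} / (A^n)_{3,1} = r^{1/3} and lim_{n→∞} (A^n)_{1,1} / (A^n)_{3,1} = r^{2/3}. -/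
/-!
For every cube root `s` of `r`, the vector `(s², s, 1)` is an eigenvector of the Khovanskii
matrix with eigenvalue `x + s + s²`. Writing `s = ωʲ r^{1/3}`, the first basis vector is
`∑ⱼ (3 s²)⁻¹ (s², s, 1)` because `∑ⱼ ω^{-j} = ∑ⱼ ω^{-2j} = 0`, so every entry of the first
column of `Aⁿ` is a combination of the three `n`-th powers of the eigenvalues. The dominance
hypothesis makes the real eigenvalue win, so the ratios of entries tend to the ratios of the
entries of `(r^{2/3}, r^{1/3}, 1)`.
-/

open Matrix Filter Real Topology

section Asymptotics

variable {𝕜 ι : Type*} [NormedField 𝕜] [Fintype ι] [DecidableEq ι] {μ a b : ι → 𝕜} {i₀ : ι}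

theorem tendsto_sum_mul_pow_div_pow (hμ : μ i₀ ≠ 0) (hdom : ∀ j ≠ i₀, ‖μ j‖ < ‖μ i₀‖) :
    Tendsto (fun n : ℕ => (∑ j, a j * μ j ^ n) / μ i₀ ^ n) atTop (𝓝 (a i₀)) := by
  have hterm : ∀ j, Tendsto (fun n : ℕ => a j * (μ j / μ i₀) ^ n) atTop
      (𝓝 (if j = i₀ then a j else 0)) := by
    intro j
    split_ifs with hj
    · subst hj
      simp [div_self hμ]
    · have hlt : ‖μ j / μ i₀‖ < 1 := by
        rw [norm_div, div_lt_one (norm_pos_iff.mpr hμ)]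
        exact hdom j hj
      simpa using (tendsto_pow_atTop_nhds_zero_of_norm_lt_one hlt).const_mul (a j)
  have hsum := tendsto_finsetSum Finset.univ fun j _ => hterm j
  rw [Finset.sum_ite_eq' Finset.univ i₀, if_pos (Finset.mem_univ _)] at hsum
  refine hsum.congr fun n => ?_
  simp only [Finset.sum_div, div_pow, mul_div_assoc]

theorem tendsto_sum_mul_pow_div_sum_mul_pow (hμ : μ i₀ ≠ 0)
    (hdom : ∀ j ≠ i₀, ‖μ j‖ < ‖μ i₀‖) (hb : b i₀ ≠ 0) :
    Tendsto (fun n : ℕ => (∑ j, a j * μ j ^ n) / ∑ j, b j * μ j ^ n) atTop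
      (𝓝 (a i₀ / b i₀)) :=
  ((tendsto_sum_mul_pow_div_pow hμ hdom).div (tendsto_sum_mul_pow_div_pow hμ hdom) hb).congr
    fun n => div_div_div_cancel_right₀ (pow_ne_zero n hμ) _ _

end Asymptotics

theorem Matrix.pow_mulVec_sum_smul {R n ι : Type*} [CommRing R] [Fintype n] [DecidableEq n]
    [Fintype ι] {M : Matrix n n R} {μ : ι → R} {v : ι → n → R}
    (hv : ∀ j, M *ᵥ v j = μ j • v j) (c : ι → R) (k : ℕ) :
    M ^ k *ᵥ ∑ j, c j • v j = ∑ j, (c j * μ j ^ k) • v j := by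
  have hpow : ∀ j, M ^ k *ᵥ v j = μ j ^ k • v j := by
    intro j
    induction k with
    | zero => simp
    | succ k ih => rw [pow_succ', ← mulVec_mulVec, ih, mulVec_smul, hv, smul_smul, pow_succ]
  simp only [mulVec_sum, mulVec_smul, hpow, smul_smul]

def khovanskiiMatrix {R : Type*} [CommRing R] (x r : R) : Matrix (Fin 3) (Fin 3) R :=
  !![x, r, r; 1, x, r; 1, 1, x]

theorem khovanskiiMatrix_map {R S : Type*} [CommRing R] [CommRing S] (f : R →+* S) (x r : R) :
    (khovanskiiMatrix x r).map f = khovanskiiMatrix (f x) (f r) := by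
  ext i j; fin_cases i <;> fin_cases j <;> simp [khovanskiiMatrix]

theorem khovanskiiMatrix_mulVec {R : Type*} [CommRing R] (x s : R) :
    khovanskiiMatrix x (s ^ 3) *ᵥ ![s ^ 2, s, 1] = (x + s + s ^ 2) • ![s ^ 2, s, 1] := by
  ext i; fin_cases i <;> simp [khovanskiiMatrix, Fin.sum_univ_three, mulVec, dotProduct] <;> ring

theorem single_zero_eq_sum_smul {K : Type*} [Field K] {ω t : K} (hω : ω ^ 2 + ω + 1 = 0)
    (ht : t ≠ 0) (h3 : (3 : K) ≠ 0) :
    Pi.single 0 1 = ∑ j : Fin 3,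
      (3 * (ω ^ (j : ℕ) * t) ^ 2)⁻¹ • ![(ω ^ (j : ℕ) * t) ^ 2, ω ^ (j : ℕ) * t, 1] := by
  have hω0 : ω ≠ 0 := by rintro rfl; norm_num at hω
  ext i; fin_cases i <;> simp [Fin.sum_univ_three] <;> field_simp
  · norm_num
  · linear_combination -hω
  · linear_combination (ω - ω ^ 2 - 1) * hω

theorem khovanskiiMatrix_pow_apply_zero {K : Type*} [Field K] {ω t : K} (hω : ω ^ 2 + ω + 1 = 0)
    (ht : t ≠ 0) (h3 : (3 : K) ≠ 0) (x : K) (n : ℕ) (i : Fin 3) :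
    (khovanskiiMatrix x (t ^ 3) ^ n) i 0 = ∑ j : Fin 3,
      ((3 * (ω ^ (j : ℕ) * t) ^ 2)⁻¹ * ![(ω ^ (j : ℕ) * t) ^ 2, ω ^ (j : ℕ) * t, 1] i) *
        (x + ω ^ (j : ℕ) * t + (ω ^ (j : ℕ) * t) ^ 2) ^ n := by
  have hω3 : ω ^ 3 = 1 := by linear_combination (ω - 1) * hω
  have hv : ∀ j : Fin 3,
      khovanskiiMatrix x (t ^ 3) *ᵥ ![(ω ^ (j : ℕ) * t) ^ 2, ω ^ (j : ℕ) * t, 1] =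
        (x + ω ^ (j : ℕ) * t + (ω ^ (j : ℕ) * t) ^ 2) •
          ![(ω ^ (j : ℕ) * t) ^ 2, ω ^ (j : ℕ) * t, 1] := by
    intro j
    have hcube : (ω ^ (j : ℕ) * t) ^ 3 = t ^ 3 := by
      rw [mul_pow, ← pow_mul, mul_comm (j : ℕ), pow_mul, hω3, one_pow, one_mul]
    rw [← hcube]
    exact khovanskiiMatrix_mulVec x _
  rw [← col_apply (khovanskiiMatrix x (t ^ 3) ^ n) 0 i, ← mulVec_single_one,
    single_zero_eq_sum_smul hω ht h3, pow_mulVec_sum_smul hv, Finset.sum_apply]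
  simp only [Pi.smul_apply, smul_eq_mul]
  exact Finset.sum_congr rfl fun j _ => by ring

theorem norm_add_mul_add_sq_lt {x t : ℝ} {ω : ℂ} (hω : IsPrimitiveRoot ω 3)
    (hdom : ∀ ω : ℂ, ω ^ 3 = 1 → ω ≠ 1 → ‖(x : ℂ) + ω * t + ω ^ 2 * t ^ 2‖ < x + t + t ^ 2)
    {j : Fin 3} (hj : j ≠ 0) :
    ‖(x : ℂ) + ω ^ (j : ℕ) * t + (ω ^ (j : ℕ) * t) ^ 2‖ < x + t + t ^ 2 := by
  have hroot : (ω ^ (j : ℕ)) ^ 3 = 1 := by rw [← pow_mul, pow_mul', hω.pow_eq_one, one_pow]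
  have hne : ω ^ (j : ℕ) ≠ 1 :=
    hω.pow_ne_one_of_pos_of_lt (Fin.val_ne_zero_iff.mpr hj) j.isLt
  simpa [mul_pow] using hdom _ hroot hne

theorem tendsto_khovanskiiMatrix_pow_div {x t : ℝ} (ht : 0 < t)
    (hdom : ∀ ω : ℂ, ω ^ 3 = 1 → ω ≠ 1 → ‖(x : ℂ) + ω * t + ω ^ 2 * t ^ 2‖ < x + t + t ^ 2)
    (i : Fin 3) :
    Tendsto (fun n => (khovanskiiMatrix x (t ^ 3) ^ n) i 0 / (khovanskiiMatrix x (t ^ 3) ^ n) 2 0)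
      atTop (𝓝 (![t ^ 2, t, 1] i)) := by
  set ω : ℂ := Complex.exp (2 * π * Complex.I / (3 : ℕ))
  have hω : IsPrimitiveRoot ω 3 := Complex.isPrimitiveRoot_exp 3 three_ne_zero
  have hω2 : ω ^ 2 + ω + 1 = 0 := by
    simpa [Finset.sum_range_succ, add_comm, add_assoc] using hω.geom_sum_eq_zero (by norm_num)
  have htC : (t : ℂ) ≠ 0 := by exact_mod_cast ht.ne'
  have hentry : ∀ n (i : Fin 3), ((khovanskiiMatrix x (t ^ 3) ^ n) i 0 : ℂ) =
      (khovanskiiMatrix (x : ℂ) ((t : ℂ) ^ 3) ^ n) i 0 := fun n i => by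
    rw [← Complex.ofReal_pow]
    exact (congrFun₂ (Matrix.map_pow _ Complex.ofRealHom n) i 0).trans
      (by rw [khovanskiiMatrix_map]; rfl)
  set μ : Fin 3 → ℂ := fun j => x + ω ^ (j : ℕ) * t + (ω ^ (j : ℕ) * t) ^ 2
  have hΛ : 0 < x + t + t ^ 2 :=
    (norm_nonneg _).trans_lt (norm_add_mul_add_sq_lt hω hdom (j := 1) one_ne_zero)
  have hμ0 : μ 0 = ((x + t + t ^ 2 : ℝ) : ℂ) := by simp [μ]
  have hμ0_ne : μ 0 ≠ 0 := by rw [hμ0]; exact_mod_cast hΛ.ne'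
  have hdom' : ∀ j ≠ 0, ‖μ j‖ < ‖μ 0‖ := by
    rw [hμ0, Complex.norm_real, Real.norm_of_nonneg hΛ.le]
    exact fun j hj => norm_add_mul_add_sq_lt hω hdom hj
  set c : Fin 3 → ℂ := fun j => (3 * (ω ^ (j : ℕ) * t) ^ 2)⁻¹
  set v : Fin 3 → Fin 3 → ℂ := fun j => ![(ω ^ (j : ℕ) * t) ^ 2, ω ^ (j : ℕ) * t, 1]
  have key := tendsto_sum_mul_pow_div_sum_mul_pow (a := fun j => c j * v j i)
    (b := fun j => c j * v j 2) hμ0_ne hdom' (by simp [c, v, htC])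
  rw [← tendsto_ofReal_iff]
  convert key using 2 with n
  · push_cast
    rw [hentry, hentry, khovanskiiMatrix_pow_apply_zero hω2 htC three_ne_zero,
      khovanskiiMatrix_pow_apply_zero hω2 htC three_ne_zero]
  · fin_cases i <;> simp [c, v] <;> field_simp

theorem khovanskii_tendsto_general (r : ℝ) (hr : 1 < r)
    (x : ℚ)
    (A : Matrix (Fin 3) (Fin 3) ℝ)
    (hA : A = !![(x : ℝ), r, r; 1, (x : ℝ), r; 1, 1, (x : ℝ)])
    (hdom : ∀ ω : ℂ, ω ^ 3 = 1 → ω ≠ 1 →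
      ‖(x : ℂ) + ω * (r ^ ((1 : ℝ) / 3) : ℝ) +
          ω ^ 2 * (r ^ ((2 : ℝ) / 3) : ℝ)‖ <
        (x : ℝ) + r ^ ((1 : ℝ) / 3) + r ^ ((2 : ℝ) / 3)) :
    Tendsto (fun n : ℕ => (A ^ n) 1 0 / (A ^ n) 2 0) atTop (nhds (r ^ ((1 : ℝ) / 3))) ∧
    Tendsto (fun n : ℕ => (A ^ n) 0 0 / (A ^ n) 2 0) atTop (nhds (r ^ ((2 : ℝ) / 3))) := by
  have hr0 : 0 < r := zero_lt_one.trans hr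
  set t := r ^ ((1 : ℝ) / 3)
  have ht : 0 < t := rpow_pos_of_pos hr0 _
  have hr3 : r = t ^ 3 := by
    rw [← rpow_natCast, ← rpow_mul hr0.le]
    norm_num
  have ht2 : r ^ ((2 : ℝ) / 3) = t ^ 2 := by
    rw [← rpow_natCast, ← rpow_mul hr0.le]
    norm_num
  have hdom' : ∀ ω : ℂ, ω ^ 3 = 1 → ω ≠ 1 →
      ‖((x : ℝ) : ℂ) + ω * t + ω ^ 2 * t ^ 2‖ < x + t + t ^ 2 := fun ω h1 h2 => by
    simpa [ht2] using hdom ω h1 h2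
  obtain rfl : A = khovanskiiMatrix (x : ℝ) (t ^ 3) := by rw [hA, ← hr3]; rfl
  rw [ht2]
  exact ⟨by simpa using tendsto_khovanskiiMatrix_pow_div ht hdom' 1,
    by simpa using tendsto_khovanskiiMatrix_pow_div ht hdom' 0⟩

/-- Khovanskii matrix approximations of cube roots: under the dominance condition,
ratios of entries of `Aⁿ` converge to `r^{1/3}` and `r^{2/3}`. -/
theorem khovanskii_tendsto (r : ℝ) (hr : 1 < r) (hncube : ¬ ∃ s : ℚ, (s : ℝ) ^ 3 = r)
    (x : ℚ) (hx : 0 ≤ x)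
    (A : Matrix (Fin 3) (Fin 3) ℝ)
    (hA : A = !![(x : ℝ), r, r; 1, (x : ℝ), r; 1, 1, (x : ℝ)])
    (hdom : ∀ ω : ℂ, ω ^ 3 = 1 → ω ≠ 1 →
      ‖(x : ℂ) + ω * (r ^ ((1 : ℝ) / 3) : ℝ) +
          ω ^ 2 * (r ^ ((2 : ℝ) / 3) : ℝ)‖ <
        (x : ℝ) + r ^ ((1 : ℝ) / 3) + r ^ ((2 : ℝ) / 3)) :
    Tendsto (fun n : ℕ => (A ^ n) 1 0 / (A ^ n) 2 0) atTop (nhds (r ^ ((1 : ℝ) / 3))) ∧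
    Tendsto (fun n : ℕ => (A ^ n) 0 0 / (A ^ n) 2 0) atTop (nhds (r ^ ((2 : ℝ) / 3))) :=
  khovanskii_tendsto_general r hr x A hA hdom
end
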